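/- arXiv:0910.4172 — 3 statements merged into one kernel-verified Lean document; each statement's English description precedes it below -/
import Mathlib

section
/- Let S be a centrally symmetric convex body in ℝ^d with S = −S, and let Λ be a lattice in ℝ^d such that the translates {S + λ : λ ∈ Λ} cover ℝ^d. Then for every finite family F of translates of S, τ(F) ≤ vol(⋃F) / covol(Λ), where vol(⋃F) is the Lebesgue volume of the union of the members of F. (Equivalently, τ(F) ≤ θ · vol(⋃F)/vol(S) where θ = vol(S)/covol(Λ) is the density of the lattice covering.) -/
/-!
Since the translates `S + λ` cover space and `S = -S`, every translate `v + S` contains a point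
of every coset `x + Λ`, so `(x + Λ) ∩ ⋃ F` pierces the family. Integrating `#((x + Λ) ∩ ⋃ F)`
over a fundamental domain `D` of `Λ` gives `vol(⋃ F)`, so for some `x ∈ D` this count is at most
`vol(⋃ F) / vol(D) = vol(⋃ F) / covol(Λ)`.
-/

open Pointwise MeasureTheory Submodule ENNReal

theorem Set.encard_vadd_mem_eq_tsum_indicator {G α : Type*} [VAdd G α] (U : Set α) (x : α) :
    ({g : G | g +ᵥ x ∈ U}.encard : ℝ≥0∞) = ∑' g : G, U.indicator 1 (g +ᵥ x) := by
  rw [← tsum_set_one, tsum_subtype _ fun _ => 1]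
  rfl

namespace MeasureTheory.IsAddFundamentalDomain

variable {G α : Type*} [AddGroup G] [Countable G] [AddAction G α] [MeasurableSpace α]
  [MeasurableConstVAdd G α] {μ : Measure α} [VAddInvariantMeasure G α μ] {F U : Set α}

theorem measure_eq_setLIntegral_encard (h : IsAddFundamentalDomain G F μ) (hU : MeasurableSet U) :
    μ U = ∫⁻ x in F, ({g : G | g +ᵥ x ∈ U}.encard : ℝ≥0∞) ∂μ := by
  simp_rw [Set.encard_vadd_mem_eq_tsum_indicator]
  rw [← lintegral_indicator_one hU, h.lintegral_eq_tsum'']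
  exact (lintegral_tsum fun g =>
    ((measurable_one.indicator hU).comp (measurable_const_vadd g)).aemeasurable).symm

theorem exists_encard_vadd_mem_mul_le (h : IsAddFundamentalDomain G F μ) (hU : MeasurableSet U)
    (hF : μ F ≠ 0) (hF' : μ F ≠ ∞) :
    ∃ x ∈ F, ({g : G | g +ᵥ x ∈ U}.encard : ℝ≥0∞) * μ F ≤ μ U := by
  have hmeas : Measurable fun x => ({g : G | g +ᵥ x ∈ U}.encard : ℝ≥0∞) := by
    simp_rw [Set.encard_vadd_mem_eq_tsum_indicator]
    exact .tsum fun g => (measurable_one.indicator hU).comp (measurable_const_vadd g)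
  obtain ⟨x, hxF, hx⟩ := exists_le_setLAverage hF hF' hmeas.aemeasurable
  rw [setLAverage_eq, ← h.measure_eq_setLIntegral_encard hU,
    ENNReal.le_div_iff_mul_le (.inl hF) (.inl hF')] at hx
  exact ⟨x, hxF, hx⟩

theorem exists_finite_vadd_mem_ncard_le (h : IsAddFundamentalDomain G F μ) (hU : MeasurableSet U)
    (hU' : μ U ≠ ∞) (hF : μ F ≠ 0) (hF' : μ F ≠ ∞) :
    ∃ x ∈ F, {g : G | g +ᵥ x ∈ U}.Finite ∧
      ({g : G | g +ᵥ x ∈ U}.ncard : ℝ) ≤ (μ U).toReal / (μ F).toReal := by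
  obtain ⟨x, hxF, hx⟩ := h.exists_encard_vadd_mem_mul_le hU hF hF'
  have hfin : {g : G | g +ᵥ x ∈ U}.Finite := by
    refine Set.encard_ne_top_iff.1 fun htop => hU' (top_unique ?_)
    rwa [htop, ENat.toENNReal_top, top_mul hF] at hx
  refine ⟨x, hxF, hfin, ?_⟩
  rw [← hfin.cast_ncard_eq, ENat.toENNReal_coe] at hx
  rw [le_div_iff₀ (toReal_pos hF hF'), ← toReal_natCast, ← toReal_mul]
  exact toReal_mono hU' hx

end MeasureTheory.IsAddFundamentalDomain

theorem AddSubgroup.exists_vadd_mem_vadd_of_forall_mem_vadd {E : Type*} [AddCommGroup E]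
    {Λ : AddSubgroup E} {S : Set E} (hS : S = -S) (hcover : ∀ y : E, ∃ l : Λ, y ∈ l +ᵥ S)
    (x v : E) : ∃ l : Λ, l +ᵥ x ∈ v +ᵥ S := by
  obtain ⟨l, s, hs, hls⟩ := hcover (v - x)
  refine ⟨l, -s, hS ▸ Set.neg_mem_neg.2 hs, ?_⟩
  change (l : E) + s = v - x at hls
  change v + -s = l + x
  rw [← sub_eq_iff_eq_add.2 hls.symm]
  abel

theorem Submodule.sum_intCast_smul_mem_span_int {ι R E : Type*} [Fintype ι] [Ring R]
    [AddCommGroup E] [Module R E] (v : ι → E) (c : ι → ℤ) :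
    ∑ i, (c i : R) • v i ∈ span ℤ (Set.range v) := by
  simp_rw [Int.cast_smul_eq_zsmul]
  exact mem_span_range_iff_exists_fun ℤ |>.2 ⟨c, rfl⟩

theorem setOf_sum_smul_mem_Icc_eq_parallelepiped {ι E : Type*} [Fintype ι] [AddCommGroup E]
    [Module ℝ E] (v : ι → E) :
    {x : E | ∃ t : ι → ℝ, (∀ i, t i ∈ Set.Icc (0 : ℝ) 1) ∧ x = ∑ i, t i • v i} =
      parallelepiped v := by
  ext x
  simp [mem_parallelepiped_iff, Pi.le_def, forall_and]

theorem piercing_translates_lattice_covering_bound_general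
    (d : ℕ)
    (S : Set (EuclideanSpace ℝ (Fin d)))
    (hScompact : IsCompact S)
    (hSsymm : S = -S)
    (b : Module.Basis (Fin d) ℝ (EuclideanSpace ℝ (Fin d)))
    (hcover : ∀ x : EuclideanSpace ℝ (Fin d),
      ∃ c : Fin d → ℤ, x ∈ (∑ i, (c i : ℝ) • b i) +ᵥ S)
    (V : Finset (EuclideanSpace ℝ (Fin d))) :
    ∃ P : Finset (EuclideanSpace ℝ (Fin d)),
      (∀ v ∈ V, ∃ x ∈ P, x ∈ v +ᵥ S) ∧
      (P.card : ℝ) ≤ (volume (⋃ v ∈ V, v +ᵥ S)).toReal /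
        (volume {x : EuclideanSpace ℝ (Fin d) | ∃ t : Fin d → ℝ,
          (∀ i, t i ∈ Set.Icc (0 : ℝ) 1) ∧ x = ∑ i, t i • b i}).toReal := by
  let Λ := (span ℤ (Set.range b)).toAddSubgroup
  have : Countable Λ := inferInstanceAs (Countable (span ℤ (Set.range b)))
  have hU : IsCompact (⋃ v ∈ V, v +ᵥ S) :=
    V.finite_toSet.isCompact_biUnion fun v _ => hScompact.vadd v
  have hpierce (x v) : ∃ l : Λ, l +ᵥ x ∈ v +ᵥ S :=
    AddSubgroup.exists_vadd_mem_vadd_of_forall_mem_vadd hSsymm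
      (fun y => (hcover y).imp' (fun c => ⟨_, sum_intCast_smul_mem_span_int b c⟩) fun _ => id) x v
  obtain ⟨x, -, hfin, hcard⟩ :=
    (ZSpan.isAddFundamentalDomain' b volume).exists_finite_vadd_mem_ncard_le
      hU.isClosed.measurableSet hU.measure_lt_top.ne (ZSpan.measure_fundamentalDomain_ne_zero b)
      (ZSpan.fundamentalDomain_isBounded b).measure_lt_top.ne
  refine ⟨hfin.toFinset.image (· +ᵥ x), fun v hv => ?_, ?_⟩
  · obtain ⟨l, hl⟩ := hpierce x v
    exact ⟨l +ᵥ x, Finset.mem_image_of_mem _ (hfin.mem_toFinset.2 (Set.mem_biUnion hv hl)), hl⟩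
  · rw [setOf_sum_smul_mem_Icc_eq_parallelepiped,
      ← measure_congr (ZSpan.fundamentalDomain_ae_parallelepiped b volume)]
    calc ((hfin.toFinset.image (· +ᵥ x)).card : ℝ) ≤ hfin.toFinset.card := by
          exact_mod_cast Finset.card_image_le
      _ = _ := by rw [Set.ncard_eq_toFinset_card _ hfin]
      _ ≤ _ := hcard

/-- Let `S` be a centrally symmetric convex body in `ℝ^d`, and suppose the lattice
generated by the basis `b` gives a covering of `ℝ^d` by translates of `S`. Then for every
finite family `F` of translates of `S`, `τ(F) ≤ vol(⋃F)/covol(Λ)`. -/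
theorem piercing_translates_lattice_covering_bound
    (d : ℕ)
    (S : Set (EuclideanSpace ℝ (Fin d)))
    (hScompact : IsCompact S) (hSconv : Convex ℝ S)
    (hSint : (interior S).Nonempty) (hSsymm : S = -S)
    (b : Module.Basis (Fin d) ℝ (EuclideanSpace ℝ (Fin d)))
    (hcover : ∀ x : EuclideanSpace ℝ (Fin d),
      ∃ c : Fin d → ℤ, x ∈ (∑ i, (c i : ℝ) • b i) +ᵥ S)
    (V : Finset (EuclideanSpace ℝ (Fin d))) :
    ∃ P : Finset (EuclideanSpace ℝ (Fin d)),
      (∀ v ∈ V, ∃ x ∈ P, x ∈ v +ᵥ S) ∧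
      (P.card : ℝ) ≤ (volume (⋃ v ∈ V, v +ᵥ S)).toReal /
        (volume {x : EuclideanSpace ℝ (Fin d) | ∃ t : Fin d → ℝ,
          (∀ i, t i ∈ Set.Icc (0 : ℝ) 1) ∧ x = ∑ i, t i • b i}).toReal :=
  piercing_translates_lattice_covering_bound_general d S hScompact hSsymm b hcover V
end

section
/- For every centrally symmetric convex body C in the plane ℝ² (C = −C) and every nonempty finite family F of translates of C, τ(F) ≤ 4 · ν(F) − 1. -/
/-!
Let `p` be the gauge of `C`: the translate `v +ᵥ C` is the closed `p`-ball of radius `1` about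
`v`, and two translates are disjoint as soon as their centres are at `p`-distance more than `2`.
If all centres are pairwise within distance `2`, three points pierce the family (Grünbaum): take
a triangle of maximal area with vertices among the centres; every centre has barycentric
coordinates at most `1` with respect to it, and is then within distance `1` of a midpoint of one
of its sides. Otherwise let `w` be the lowest centre. The centres within distance `2` of `w` lie
in the upper half of the ball of radius `2` about `w`, which four unit balls cover, their centres
read off an affinely regular hexagon inscribed in the unit sphere. Remove these translates and
recurse, adding `w` to the packing; if none remain, two disjoint translates already give a packing
of size `2` against four piercing points.
-/

open Pointwise
open scoped Topology

namespace Seminorm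

variable {E : Type*} [AddCommGroup E] [Module ℝ E] (p : Seminorm ℝ E)

theorem map_smul_of_nonneg {r : ℝ} (hr : 0 ≤ r) (x : E) : p (r • x) = r * p x := by
  rw [map_smul_eq_mul, Real.norm_of_nonneg hr]

theorem map_smul_add_smul_le {a b : ℝ} (ha : 0 ≤ a) (hb : 0 ≤ b) (x y : E) :
    p (a • x + b • y) ≤ a * p x + b * p y := by
  simpa only [p.map_smul_of_nonneg ha, p.map_smul_of_nonneg hb] using
    map_add_le_add p (a • x) (b • y)

theorem map_smul_add_smul_add_smul_le {a b c : ℝ} (ha : 0 ≤ a) (hb : 0 ≤ b) (hc : 0 ≤ c)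
    (x y z : E) : p (a • x + b • y + c • z) ≤ a * p x + b * p y + c * p z := by
  have := map_add_le_add p (a • x + b • y) (c • z)
  rw [p.map_smul_of_nonneg hc] at this
  linarith [p.map_smul_add_smul_le ha hb x y]

variable {p}

section Cone

variable {b b' : E} (hb : p b = 1) (hb' : p b' = 1) (hbb' : p (b - b') ≤ 1)
include hb hbb'

theorem le_two_of_smul_add_smul_le_two {α β : ℝ} (hα : 0 ≤ α) (hβ : 0 ≤ β)
    (hx : p (α • b + β • b') ≤ 2) : α ≤ 2 := by
  have hsum : p ((α + β) • b) ≤ p (α • b + β • b') + β * p (b - b') := by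
    rw [← p.map_smul_of_nonneg hβ]
    exact (congrArg p (by module)).trans_le (map_add_le_add p _ _)
  rw [p.map_smul_of_nonneg (by positivity), hb] at hsum
  nlinarith

include hb'

theorem smul_add_smul_sub_add_le_one_of_le {α β : ℝ} (hβ : 0 ≤ β) (hβα : β ≤ α)
    (hσ : 1 ≤ α + β) (hx : p (α • b + β • b') ≤ 2) : p (α • b + β • b' - (b + b')) ≤ 1 := by
  have hbb'' : p (-b') = 1 := by rw [map_neg_eq_map, hb']
  rcases le_or_gt α 1 with hα1 | hα1
  · have := p.map_smul_add_smul_le (sub_nonneg.2 hα1) (by linarith : 0 ≤ 1 - β) (-b) (-b')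
    rw [map_neg_eq_map, hb, hbb''] at this
    rw [show α • b + β • b' - (b + b') = (1 - α) • -b + (1 - β) • -b' by module]
    linarith
  rcases le_or_gt (α + β) 2 with hσ2 | hσ2
  · have := p.map_smul_add_smul_le (by linarith : 0 ≤ α - 1) (sub_nonneg.2 hσ2) (b - b') (-b')
    rw [hbb''] at this
    rw [show α • b + β • b' - (b + b') = (α - 1) • (b - b') + (2 - (α + β)) • -b' by module]
    nlinarith
  · -- rescaling `x` onto the segment `[2b, 2b']`, whose points lie within `1` of `b + b'`
    have hα2 := le_two_of_smul_add_smul_le_two hb hbb' (by linarith) hβ hx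
    have := p.map_smul_add_smul_le (by linarith : 0 ≤ α + β - 2) (sub_nonneg.2 hβα)
      (α • b + β • b') (b - b')
    rw [show (α + β - 2) • (α • b + β • b') + (α - β) • (b - b') =
      (α + β) • (α • b + β • b' - (b + b')) by module, p.map_smul_of_nonneg (by linarith)] at this
    nlinarith

theorem le_one_or_sub_add_le_one_of_eq_smul_add_smul {x : E} {α β : ℝ} (hα : 0 ≤ α)
    (hβ : 0 ≤ β) (hxe : x = α • b + β • b') (hx : p x ≤ 2) :
    p x ≤ 1 ∨ p (x - (b + b')) ≤ 1 := by
  subst hxe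
  rcases le_or_gt (α + β) 1 with hσ | hσ
  · left
    have := p.map_smul_add_smul_le hα hβ b b'
    rw [hb, hb'] at this
    linarith
  right
  rcases le_total β α with hβα | hαβ
  · exact smul_add_smul_sub_add_le_one_of_le hb hb' hbb' hβ hβα hσ.le hx
  · rw [add_comm (α • b)] at hx ⊢
    rw [add_comm b]
    rw [map_sub_rev] at hbb'
    exact smul_add_smul_sub_add_le_one_of_le hb' hb hbb' hα hαβ (by linarith) hx

end Cone

section Midpoint

variable {S : Set E} (hS : ∀ u ∈ S, ∀ v ∈ S, p (u - v) ≤ 2)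
  {x₁ x₂ x₃ y : E} (h₁ : x₁ ∈ S) (h₂ : x₂ ∈ S) (h₃ : x₃ ∈ S) (hy : y ∈ S)
  {l₁ l₂ l₃ : ℝ} (hl : l₁ + l₂ + l₃ = 1) (hyl : y = l₁ • x₁ + l₂ • x₂ + l₃ • x₃)
include hS h₁ h₂ h₃ hy hl hyl

theorem sub_midpoint_le_one_of_le (hl₁₂ : l₁ ≤ l₂) (hl₁₃ : l₁ ≤ l₃) (hl₂ : l₂ ≤ 1)
    (hl₃ : l₃ ≤ 1) : p (y - midpoint ℝ x₂ x₃) ≤ 1 := by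
  suffices h : p ((2 : ℝ) • y - x₂ - x₃) ≤ 2 by
    rw [show y - midpoint ℝ x₂ x₃ = (2⁻¹ : ℝ) • ((2 : ℝ) • y - x₂ - x₃) by
      rw [midpoint_eq_smul_add, invOf_eq_inv]; module, p.map_smul_of_nonneg (by norm_num)]
    linarith
  obtain rfl : l₁ = 1 - l₂ - l₃ := by linarith
  have d₁₂ := hS _ h₁ _ h₂
  have d₁₃ := hS _ h₁ _ h₃
  rcases le_or_gt (1 - l₂ - l₃) 0 with hneg | hpos
  · have := p.map_smul_add_smul_add_smul_le (neg_nonneg.2 hneg) (sub_nonneg.2 hl₂)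
      (sub_nonneg.2 hl₃) (y - x₁) (y - x₂) (y - x₃)
    rw [show -(1 - l₂ - l₃) • (y - x₁) + (1 - l₂) • (y - x₂) + (1 - l₃) • (y - x₃) =
      (2 : ℝ) • y - x₂ - x₃ by rw [hyl]; module] at this
    nlinarith [hS _ hy _ h₁, hS _ hy _ h₂, hS _ hy _ h₃]
  rcases le_or_gt l₂ (1 / 2) with hl₂' | hl₂'
  · rcases le_or_gt l₃ (1 / 2) with hl₃' | hl₃'
    · have := p.map_smul_add_smul_le (by linarith : 0 ≤ 1 - 2 * l₂) (by linarith : 0 ≤ 1 - 2 * l₃)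
        (x₁ - x₂) (x₁ - x₃)
      rw [show (1 - 2 * l₂) • (x₁ - x₂) + (1 - 2 * l₃) • (x₁ - x₃) = (2 : ℝ) • y - x₂ - x₃ by
        rw [hyl]; module] at this
      nlinarith
    · have := p.map_smul_add_smul_le (by linarith : 0 ≤ 2 * l₃ - 1)
        (by linarith : 0 ≤ 2 * (1 - l₂ - l₃)) (x₃ - x₂) (x₁ - x₂)
      rw [show (2 * l₃ - 1) • (x₃ - x₂) + (2 * (1 - l₂ - l₃)) • (x₁ - x₂) =
        (2 : ℝ) • y - x₂ - x₃ by rw [hyl]; module] at this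
      nlinarith [hS _ h₃ _ h₂]
  · have := p.map_smul_add_smul_le (by linarith : 0 ≤ 2 * l₂ - 1)
      (by linarith : 0 ≤ 2 * (1 - l₂ - l₃)) (x₂ - x₃) (x₁ - x₃)
    rw [show (2 * l₂ - 1) • (x₂ - x₃) + (2 * (1 - l₂ - l₃)) • (x₁ - x₃) =
      (2 : ℝ) • y - x₂ - x₃ by rw [hyl]; module] at this
    nlinarith [hS _ h₂ _ h₃]

theorem sub_midpoint_le_one (hl₁ : l₁ ≤ 1) (hl₂ : l₂ ≤ 1) (hl₃ : l₃ ≤ 1) :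
    p (y - midpoint ℝ x₂ x₃) ≤ 1 ∨ p (y - midpoint ℝ x₁ x₃) ≤ 1 ∨
      p (y - midpoint ℝ x₁ x₂) ≤ 1 := by
  by_cases h₁min : l₁ ≤ l₂ ∧ l₁ ≤ l₃
  · exact Or.inl (sub_midpoint_le_one_of_le hS h₁ h₂ h₃ hy hl hyl h₁min.1 h₁min.2 hl₂ hl₃)
  rcases le_total l₂ l₃ with h₂₃ | h₃₂
  · exact Or.inr (Or.inl (sub_midpoint_le_one_of_le hS h₂ h₁ h₃ hy (by linarith)
      (by rw [hyl]; module) (by grind) h₂₃ hl₁ hl₃))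
  · exact Or.inr (Or.inr (sub_midpoint_le_one_of_le hS h₃ h₁ h₂ hy (by linarith)
      (by rw [hyl]; module) (by grind) h₃₂ hl₁ hl₂))

end Midpoint

end Seminorm

local notation "ℝ²" => EuclideanSpace ℝ (Fin 2)

def signedArea (x y z : ℝ²) : ℝ := (y 0 - x 0) * (z 1 - x 1) - (y 1 - x 1) * (z 0 - x 0)

theorem signedArea_add_signedArea_add_signedArea (x₁ x₂ x₃ y : ℝ²) :
    signedArea y x₂ x₃ + signedArea x₁ y x₃ + signedArea x₁ x₂ y = signedArea x₁ x₂ x₃ := by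
  simp only [signedArea]; ring

theorem eq_barycentric_signedArea {x₁ x₂ x₃ : ℝ²} (hΔ : signedArea x₁ x₂ x₃ ≠ 0) (y : ℝ²) :
    y = (signedArea y x₂ x₃ / signedArea x₁ x₂ x₃) • x₁ +
      (signedArea x₁ y x₃ / signedArea x₁ x₂ x₃) • x₂ +
      (signedArea x₁ x₂ y / signedArea x₁ x₂ x₃) • x₃ := by
  refine PiLp.ext (Fin.forall_fin_two.2 ⟨?_, ?_⟩) <;>
  · simp only [PiLp.add_apply, PiLp.smul_apply, smul_eq_mul]
    field_simp
    simp only [signedArea]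
    ring

theorem exists_sub_eq_smul_of_signedArea_eq_zero {x y z : ℝ²} (hxy : x ≠ y)
    (h : signedArea x y z = 0) : ∃ t : ℝ, z - x = t • (y - x) := by
  simp only [signedArea] at h
  have hne : y 0 - x 0 ≠ 0 ∨ y 1 - x 1 ≠ 0 := by
    by_contra! hc
    exact hxy (PiLp.ext (Fin.forall_fin_two.2 ⟨by linarith [hc.1], by linarith [hc.2]⟩))
  rcases hne with h0 | h1
  · refine ⟨(z 0 - x 0) / (y 0 - x 0), PiLp.ext (Fin.forall_fin_two.2 ⟨?_, ?_⟩)⟩ <;>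
      simp only [PiLp.sub_apply, PiLp.smul_apply, smul_eq_mul]
    · exact (div_mul_cancel₀ _ h0).symm
    · rw [div_mul_eq_mul_div, eq_div_iff h0]
      linear_combination h
  · refine ⟨(z 1 - x 1) / (y 1 - x 1), PiLp.ext (Fin.forall_fin_two.2 ⟨?_, ?_⟩)⟩ <;>
      simp only [PiLp.sub_apply, PiLp.smul_apply, smul_eq_mul]
    · rw [div_mul_eq_mul_div, eq_div_iff h1]
      linear_combination -h
    · exact (div_mul_cancel₀ _ h1).symm

namespace Seminorm


variable {p : Seminorm ℝ ℝ²} (hp : ∀ x, p x = 0 → x = 0)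
include hp

theorem exists_sub_le_one_of_collinear {S : Finset ℝ²} (hSne : S.Nonempty)
    (hS : ∀ u ∈ S, ∀ v ∈ S, p (u - v) ≤ 2)
    (hcol : ∀ x ∈ S, ∀ y ∈ S, ∀ z ∈ S, signedArea x y z = 0) :
    ∃ c : ℝ², ∀ y ∈ S, p (y - c) ≤ 1 := by
  obtain ⟨⟨a, b⟩, hab, hmax⟩ := Finset.exists_max_image (S ×ˢ S)
    (fun q => p (q.2 - q.1)) (hSne.product hSne)
  rw [Finset.mem_product] at hab
  have hmax' : ∀ x ∈ S, ∀ y ∈ S, p (y - x) ≤ p (b - a) := fun x hx y hy =>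
    hmax (x, y) (Finset.mem_product.2 ⟨hx, hy⟩)
  refine ⟨midpoint ℝ a b, fun y hy => ?_⟩
  rcases eq_or_ne a b with rfl | hab'
  · rw [midpoint_self]
    exact (hmax' _ hab.1 _ hy).trans (by simp)
  obtain ⟨t, ht⟩ := exists_sub_eq_smul_of_signedArea_eq_zero hab' (hcol a hab.1 b hab.2 y hy)
  have hd : 0 < p (b - a) :=
    (apply_nonneg p _).lt_of_ne fun h => hab' (sub_eq_zero.1 (hp _ h.symm)).symm
  have hya := hmax' _ hab.1 _ hy
  have hyb := hmax' _ hab.2 _ hy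
  rw [ht, map_smul_eq_mul, Real.norm_eq_abs] at hya
  rw [show y - b = (t - 1) • (b - a) by rw [← sub_sub_sub_cancel_right y b a, ht]; module,
    map_smul_eq_mul, Real.norm_eq_abs] at hyb
  rw [show y - midpoint ℝ a b = (t - 2⁻¹) • (b - a) by
      rw [midpoint_eq_smul_add, invOf_eq_inv, ← sub_add_cancel y a, ht]; module,
    map_smul_eq_mul, Real.norm_eq_abs]
  have ht₀ := abs_le.1 ((mul_le_iff_le_one_left hd).1 hya)
  have ht₁ := abs_le.1 ((mul_le_iff_le_one_left hd).1 hyb)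
  have ht : |t - 2⁻¹| ≤ 2⁻¹ := abs_le.2 ⟨by linarith, by linarith⟩
  nlinarith [hS _ hab.2 _ hab.1]

theorem exists_card_le_three_cover_of_pairwise_le_two (S : Finset ℝ²)
    (hS : ∀ u ∈ S, ∀ v ∈ S, p (u - v) ≤ 2) :
    ∃ P : Finset ℝ², P.card ≤ 3 ∧ ∀ y ∈ S, ∃ z ∈ P, p (y - z) ≤ 1 := by
  classical
  rcases S.eq_empty_or_nonempty with rfl | hSne
  · exact ⟨∅, by simp, by simp⟩
  obtain ⟨⟨x₁, x₂, x₃⟩, hx, hmax⟩ := Finset.exists_max_image (S ×ˢ S ×ˢ S)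
    (fun q => |signedArea q.1 q.2.1 q.2.2|) (hSne.product (hSne.product hSne))
  simp only [Finset.mem_product] at hx
  obtain ⟨h₁, h₂, h₃⟩ := hx
  set Δ := signedArea x₁ x₂ x₃
  have hmax' : ∀ x ∈ S, ∀ y ∈ S, ∀ z ∈ S, |signedArea x y z| ≤ |Δ| := fun x hx y hy z hz =>
    hmax (x, y, z) (by simp [hx, hy, hz])
  by_cases hΔ : Δ = 0
  · obtain ⟨c, hc⟩ := exists_sub_le_one_of_collinear hp hSne hS fun x hx y hy z hz =>
      abs_nonpos_iff.1 (by simpa [hΔ] using hmax' x hx y hy z hz)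
    exact ⟨{c}, by simp, fun y hy => ⟨c, by simp, hc y hy⟩⟩
  refine ⟨{midpoint ℝ x₂ x₃, midpoint ℝ x₁ x₃, midpoint ℝ x₁ x₂}, Finset.card_le_three,
    fun y hy => ?_⟩
  -- barycentric coordinates are ratios of areas, hence at most `1` by maximality of `Δ`
  have hcoord : ∀ A, |A| ≤ |Δ| → A / Δ ≤ 1 := fun A hA =>
    (le_abs_self _).trans (by rw [abs_div]; exact div_le_one_of_le₀ hA (abs_nonneg _))
  simp only [Finset.mem_insert, Finset.mem_singleton, exists_eq_or_imp, exists_eq_left]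
  exact sub_midpoint_le_one (S := S) hS h₁ h₂ h₃ hy
    (by rw [← add_div, ← add_div, signedArea_add_signedArea_add_signedArea,
      div_self hΔ]) (eq_barycentric_signedArea hΔ y) (hcoord _ (hmax' _ hy _ h₂ _ h₃))
    (hcoord _ (hmax' _ h₁ _ hy _ h₃)) (hcoord _ (hmax' _ h₁ _ h₂ _ hy))

variable (hpc : Continuous p)
include hpc

/-- `±s`, `±a`, `±(a + s)` are the vertices of an affinely regular hexagon inscribed in the unit
sphere of `p`. -/
theorem exists_inscribed_hexagon :
    ∃ s a : ℝ², p s = 1 ∧ p a = 1 ∧ p (a + s) = 1 ∧ s 1 = 0 ∧ 0 < a 1 := by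
  let u : ℝ → ℝ² := fun t => t • EuclideanSpace.single 0 1 + (1 - t ^ 2) • EuclideanSpace.single 1 1
  have hu₀ : ∀ t, u t 0 = t := fun t => by simp [u]
  have hu₁ : ∀ t, u t 1 = 1 - t ^ 2 := fun t => by simp [u]
  have hu : ∀ t, p (u t) ≠ 0 := fun t h => by
    have h₀ := hu₀ t
    have h₁ := hu₁ t
    rw [hp _ h] at h₀ h₁
    simp only [PiLp.zero_apply] at h₀ h₁
    nlinarith
  let f : ℝ → ℝ² := fun t => (p (u t))⁻¹ • u t
  have hf : ∀ t, p (f t) = 1 := fun t => by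
    rw [p.map_smul_of_nonneg (inv_nonneg.2 (apply_nonneg p _)), inv_mul_cancel₀ (hu t)]
  have hf_neg : f (-1) = -f 1 := by
    have : u (-1) = -u 1 := by simp only [u]; module
    simp only [f, this, map_neg_eq_map, smul_neg]
  -- `f` runs along the upper half of the unit sphere from `-f 1` to `f 1`
  have hcont : Continuous fun t => p (f t + f 1) := by
    have : Continuous u := by fun_prop
    exact hpc.comp (((hpc.comp this).inv₀ hu).smul this |>.add continuous_const)
  have h₂ : p (f 1 + f 1) = 2 := by rw [← two_smul ℝ, p.map_smul_of_nonneg zero_le_two, hf]; ring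
  obtain ⟨t, ht, hts⟩ := intermediate_value_Icc (by norm_num : (-1 : ℝ) ≤ 1) hcont.continuousOn
    (⟨by simp [hf_neg], by rw [h₂]; norm_num⟩ : (1 : ℝ) ∈ Set.Icc _ _)
  dsimp only at hts
  have ht₁ : t ≠ 1 := by rintro rfl; rw [h₂] at hts; norm_num at hts
  have htm : t ≠ -1 := by rintro rfl; simp [hf_neg] at hts
  refine ⟨f 1, f t, hf 1, hf t, hts, by simp [f, hu₁], ?_⟩
  have : 0 < 1 - t ^ 2 := by
    rcases ht with ⟨hl, hr⟩
    nlinarith [lt_of_le_of_ne hl (Ne.symm htm), lt_of_le_of_ne hr ht₁]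
  simp only [f, PiLp.smul_apply, smul_eq_mul, hu₁]
  exact mul_pos (inv_pos.2 ((apply_nonneg p _).lt_of_ne (hu t).symm)) this

theorem exists_card_le_four_cover_upper_half (w : ℝ²) :
    ∃ Q : Finset ℝ², Q.card ≤ 4 ∧
      ∀ v, p (v - w) ≤ 2 → w 1 ≤ v 1 → ∃ z ∈ Q, p (v - z) ≤ 1 := by
  classical
  obtain ⟨s, a, hs, ha, has, hs₁, ha₁⟩ := exists_inscribed_hexagon hp hpc
  -- one unit ball about `w` and one about the midpoint of each side `[2b, 2b']` of the doubled
  -- hexagon, for the consecutive vertices `-s, a, a + s, s` of its upper half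
  refine ⟨{w, w + (-s + a), w + (a + (a + s)), w + (a + s + s)}, Finset.card_le_four,
    fun v hv hwv => ?_⟩
  simp only [Finset.mem_insert, Finset.mem_singleton, exists_eq_or_imp, exists_eq_left,
    sub_add_eq_sub_sub v w]
  set x := v - w
  set q := x 1 / a 1
  have hq : 0 ≤ q := div_nonneg (by simp [x, hwv]) ha₁.le
  obtain ⟨r, hr⟩ := exists_sub_eq_smul_of_signedArea_eq_zero (x := 0) (y := s) (z := x - q • a)
    (fun h => by simp [← h] at hs) (by simp [signedArea, hs₁, q, div_mul_cancel₀ _ ha₁.ne'])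
  have hx : x = r • s + q • a := by rw [sub_zero, sub_zero] at hr; rw [← hr]; abel
  rcases le_or_gt r 0 with hr₀ | hr₀
  · have := p.le_one_or_sub_add_le_one_of_eq_smul_add_smul (b := -s) (b' := a)
      (by rw [map_neg_eq_map, hs]) ha (by rw [← neg_add', add_comm, map_neg_eq_map, has])
      (neg_nonneg.2 hr₀) hq (by rw [hx]; module) hv
    tauto
  rcases le_total r q with hrq | hqr
  · have := p.le_one_or_sub_add_le_one_of_eq_smul_add_smul (b := a) (b' := a + s) ha has
      (by rw [sub_add_cancel_left, map_neg_eq_map, hs]) (sub_nonneg.2 hrq) hr₀.le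
      (by rw [hx]; module) hv
    tauto
  · have := p.le_one_or_sub_add_le_one_of_eq_smul_add_smul (b := a + s) (b' := s) has hs
      (by rw [add_sub_cancel_right, ha]) hq (sub_nonneg.2 hqr) (by rw [hx]; module) hv
    tauto

theorem exists_piercing_packing (V : Finset ℝ²) (hV : V.Nonempty) :
    ∃ P W : Finset ℝ², W ⊆ V ∧ (∀ v ∈ V, ∃ x ∈ P, p (v - x) ≤ 1) ∧
      (W : Set ℝ²).Pairwise (fun u w => 2 < p (u - w)) ∧ P.card + 1 ≤ 4 * W.card := by
  classical
  induction V using Finset.strongInduction with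
  | H V ih =>
  by_cases hdiam : ∀ u ∈ V, ∀ v ∈ V, p (u - v) ≤ 2
  · obtain ⟨P, hP, hcov⟩ := exists_card_le_three_cover_of_pairwise_le_two hp V hdiam
    obtain ⟨v₀, hv₀⟩ := hV
    exact ⟨P, {v₀}, by simpa, hcov, by simp, by simp; omega⟩
  push Not at hdiam
  obtain ⟨u₀, hu₀, v₀, hv₀, h₀⟩ := hdiam
  obtain ⟨w, hw, hlow⟩ := V.exists_min_image (· 1) hV
  obtain ⟨Q, hQ, hcovQ⟩ := exists_card_le_four_cover_upper_half hp hpc w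
  set F := V.filter (fun v => 2 < p (v - w))
  rcases F.eq_empty_or_nonempty with hF | hF
  · have hne : u₀ ≠ v₀ := by rintro rfl; simp at h₀; linarith
    refine ⟨Q, {u₀, v₀}, by simp [Finset.insert_subset_iff, hu₀, hv₀], fun v hv => ?_, ?_, ?_⟩
    · refine hcovQ v (not_lt.1 fun h => ?_) (hlow v hv)
      have hvF : v ∈ F := by simp [F, hv, h]
      simp [hF] at hvF
    · rw [Finset.coe_pair, Set.pairwise_pair]
      exact fun _ => ⟨h₀, by rwa [map_sub_rev]⟩
    · rw [Finset.card_pair hne]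
      omega
  obtain ⟨P, W, hWF, hcovP, hW, hcard⟩ :=
    ih F (Finset.filter_ssubset.2 ⟨w, hw, by simp⟩) hF
  have hWw : ∀ u ∈ W, 2 < p (u - w) := fun u hu => (Finset.mem_filter.1 (hWF hu)).2
  refine ⟨P ∪ Q, insert w W, Finset.insert_subset hw (hWF.trans (Finset.filter_subset _ _)),
    fun v hv => ?_, ?_, ?_⟩
  · by_cases h : 2 < p (v - w)
    · obtain ⟨x, hx, hvx⟩ := hcovP v (by simp [F, hv, h])
      exact ⟨x, Finset.mem_union_left _ hx, hvx⟩
    · obtain ⟨x, hx, hvx⟩ := hcovQ v (not_lt.1 h) (hlow v hv)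
      exact ⟨x, Finset.mem_union_right _ hx, hvx⟩
  · rw [Finset.coe_insert]
    exact hW.insert fun u hu _ => ⟨by rw [map_sub_rev]; exact hWw u hu, hWw u hu⟩
  · rw [Finset.card_insert_of_notMem fun hwW => absurd (hWw w hwW) (by simp)]
    have := Finset.card_union_le P Q
    omega

end Seminorm

section Gauge

variable {E : Type*} [AddCommGroup E] [Module ℝ E] [TopologicalSpace E] [IsTopologicalAddGroup E]
  [ContinuousSMul ℝ E] {C : Set E}

theorem mem_nhds_zero_of_eq_neg (hconv : Convex ℝ C) (hint : (interior C).Nonempty)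
    (hsymm : C = -C) : C ∈ 𝓝 0 := by
  obtain ⟨x, hx⟩ := hint
  have hnx : -x ∈ interior C := by
    rw [hsymm, ← Set.image_neg_eq_neg]
    exact (Homeomorph.neg E).image_interior C ▸ Set.mem_image_of_mem _ hx
  have := hconv.interior hx hnx (by norm_num : (0 : ℝ) ≤ 1 / 2) (by norm_num : (0 : ℝ) ≤ 1 / 2)
    (by norm_num)
  rw [smul_neg, add_neg_cancel] at this
  exact mem_interior_iff_mem_nhds.1 this

theorem mem_vadd_iff_gauge_sub_le_one (hconv : Convex ℝ C) (hclosed : IsClosed C)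
    (h0 : C ∈ 𝓝 0) (hsymm : C = -C) {v x : E} : x ∈ v +ᵥ C ↔ gauge C (v - x) ≤ 1 := by
  rw [gauge_le_one_iff_mem_closure hconv h0, hclosed.closure_eq,
    Set.mem_vadd_set_iff_neg_vadd_mem, vadd_eq_add]
  nth_rewrite 1 [hsymm]
  rw [Set.mem_neg, neg_add, neg_neg, sub_eq_add_neg]

end Gauge

/-- For every centrally symmetric convex body `C` in the plane and every nonempty finite
family of translates of `C`, `τ(F) ≤ 4 · ν(F) − 1` (stated as `τ(F) + 1 ≤ 4 · ν(F)`). -/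
theorem piercing_translates_symmetric_planar_minus_one
    (C : Set (EuclideanSpace ℝ (Fin 2)))
    (hCcompact : IsCompact C) (hCconv : Convex ℝ C)
    (hCint : (interior C).Nonempty) (hCsymm : C = -C)
    (V : Finset (EuclideanSpace ℝ (Fin 2))) (hV : V.Nonempty) :
    ∃ P W : Finset (EuclideanSpace ℝ (Fin 2)),
      W ⊆ V ∧
      (∀ v ∈ V, ∃ x ∈ P, x ∈ v +ᵥ C) ∧
      ((W : Set (EuclideanSpace ℝ (Fin 2))).Pairwise fun u w =>
        Disjoint (u +ᵥ C) (w +ᵥ C)) ∧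
      P.card + 1 ≤ 4 * W.card := by
  have h0 : C ∈ 𝓝 0 := mem_nhds_zero_of_eq_neg hCconv hCint hCsymm
  have hbal : Balanced ℝ C := (balanced_iff_neg_mem hCconv).2 fun x hx => by
    rw [hCsymm]; simpa using hx
  set p := gaugeSeminorm hbal hCconv (absorbent_nhds_zero h0)
  have hmem : ∀ v x, x ∈ v +ᵥ C ↔ p (v - x) ≤ 1 := fun v x =>
    mem_vadd_iff_gauge_sub_le_one hCconv hCcompact.isClosed h0 hCsymm
  obtain ⟨P, W, hWV, hP, hW, hcard⟩ := Seminorm.exists_piercing_packing (p := p)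
    (fun x => (gauge_eq_zero (absorbent_nhds_zero h0) (hCcompact.isVonNBounded ℝ)).1)
    (continuous_gauge hCconv h0) V hV
  refine ⟨P, W, hWV, fun v hv => ?_, hW.mono' fun u w huw => Set.disjoint_left.2 fun x hu hw => ?_,
    hcard⟩
  · obtain ⟨x, hx, hvx⟩ := hP v hv
    exact ⟨x, hx, (hmem v x).2 hvx⟩
  · rw [hmem] at hu hw
    have := map_add_le_add p (u - x) (x - w)
    rw [sub_add_sub_cancel, map_sub_rev p x w] at this
    linarith
end

section
/- For every dimension d ≥ 2, every parallelepiped P in ℝ^d (i.e., P = p + {∑_i t_i b_i : t_i ∈ [0,1]} for some point p and some basis (b_1,…,b_d) of ℝ^d), and every finite family F of positive homothets of P, τ(F) ≤ 2^d · ν(F). -/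
/-!
Greedy argument. Take a smallest homothet `s`. In the coordinates of the basis every homothet is a
box, and an interval meeting a shorter one contains one of its endpoints; so every homothet meeting
`s` contains one of the `2^d` vertices of `s`. Put `s` in the packing, its vertices in the
transversal, and recurse on the homothets disjoint from `s`.
-/

open Function Pointwise Set

lemma exists_endpoint_mem_Icc_of_mem_Icc {a r a' r' y : ℝ} (hr : r ≤ r')
    (hy : y ∈ Icc a (a + r)) (hy' : y ∈ Icc a' (a' + r')) :
    ∃ z ∈ ({a, a + r} : Finset ℝ), z ∈ Icc a' (a' + r') := by
  obtain ⟨h₁, h₂⟩ := hy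
  obtain ⟨h₁', h₂'⟩ := hy'
  rcases le_total a' a with h | h
  · exact ⟨a, by simp, h, by linarith⟩
  · exact ⟨a + r, by simp, by linarith, by linarith⟩

section Box

variable {ι : Type*} [Fintype ι] [DecidableEq ι]

lemma card_piFinset_pair_le (c : ι → ℝ) (r : ℝ) :
    (Fintype.piFinset fun i => ({c i, c i + r} : Finset ℝ)).card ≤ 2 ^ Fintype.card ι := by
  rw [Fintype.card_piFinset]
  exact Finset.prod_le_pow_card _ _ _ fun i _ => Finset.card_le_two

lemma exists_corner_mem_box_of_mem_box {c c' y : ι → ℝ} {r r' : ℝ} (hr : r ≤ r')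
    (hy : ∀ i, y i ∈ Icc (c i) (c i + r)) (hy' : ∀ i, y i ∈ Icc (c' i) (c' i + r')) :
    ∃ z ∈ Fintype.piFinset (fun i => ({c i, c i + r} : Finset ℝ)),
      ∀ i, z i ∈ Icc (c' i) (c' i + r') := by
  choose z hz hz' using fun i => exists_endpoint_mem_Icc_of_mem_Icc hr (hy i) (hy' i)
  exact ⟨z, Fintype.mem_piFinset.mpr hz, hz'⟩

end Box

section Parallelepiped

variable {ι E : Type*} [Fintype ι] [AddCommGroup E] [Module ℝ E]

lemma mem_vadd_parallelepiped_iff (b : Module.Basis ι ℝ E) (p x : E) :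
    x ∈ p +ᵥ parallelepiped b ↔ ∀ i, b.repr (x - p) i ∈ Icc 0 1 := by
  rw [mem_vadd_set_iff_neg_vadd_mem, parallelepiped_basis_eq, vadd_eq_add, neg_add_eq_sub]
  rfl

lemma setOf_eq_vadd_parallelepiped (b : Module.Basis ι ℝ E) (p : E) :
    {x | ∃ t : ι → ℝ, (∀ i, t i ∈ Icc (0 : ℝ) 1) ∧ x = p + ∑ i, t i • b i} =
      p +ᵥ parallelepiped b := by
  ext x
  rw [mem_vadd_set_iff_neg_vadd_mem, mem_parallelepiped_iff, vadd_eq_add, neg_add_eq_sub]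
  simp only [mem_ofPred_eq, sub_eq_iff_eq_add', mem_Icc, Pi.le_def, Pi.zero_apply, Pi.one_apply,
    forall_and]

lemma mem_vadd_smul_vadd_parallelepiped_iff (b : Module.Basis ι ℝ E) (p v x : E) {l : ℝ}
    (hl : 0 < l) :
    x ∈ v +ᵥ l • (p +ᵥ parallelepiped b) ↔
      ∀ i, b.repr x i ∈ Icc (b.repr (v + l • p) i) (b.repr (v + l • p) i + l) := by
  rw [mem_vadd_set_iff_neg_vadd_mem, mem_smul_set_iff_inv_smul_mem₀ hl.ne',
    mem_vadd_parallelepiped_iff]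
  refine forall_congr' fun i => ?_
  simp only [vadd_eq_add, map_sub, map_smul, map_add, map_neg, Finsupp.coe_sub, Finsupp.coe_smul,
    Finsupp.coe_add, Finsupp.coe_neg, Pi.sub_apply, Pi.smul_apply, Pi.add_apply, Pi.neg_apply,
    smul_eq_mul]
  have hcoord : l⁻¹ * (-b.repr v i + b.repr x i) - b.repr p i
      = (b.repr x i - (b.repr v i + l * b.repr p i)) / l := by
    field_simp
    ring
  rw [hcoord, mem_Icc, mem_Icc, le_div_iff₀ hl, div_le_iff₀ hl]
  constructor <;> rintro ⟨h₁, h₂⟩ <;> constructor <;> linarith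

lemma nonempty_vadd_smul_vadd_parallelepiped (b : Module.Basis ι ℝ E) (p v : E) (l : ℝ) :
    (v +ᵥ l • (p +ᵥ parallelepiped b)).Nonempty :=
  have hzero : (0 : E) ∈ parallelepiped b :=
    (mem_parallelepiped_iff _ 0).2 ⟨0, ⟨le_rfl, zero_le_one⟩, by simp⟩
  (nonempty_of_mem hzero).vadd_set.smul_set.vadd_set

lemma exists_card_le_two_pow_pierce_larger_homothet
    (b : Module.Basis ι ℝ E) (p v : E) {l : ℝ} (hl : 0 < l) :
    ∃ C : Finset E, C.card ≤ 2 ^ Fintype.card ι ∧ ∀ (v' : E) (l' : ℝ), 0 < l' → l ≤ l' →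
      ¬Disjoint (v +ᵥ l • (p +ᵥ parallelepiped b)) (v' +ᵥ l' • (p +ᵥ parallelepiped b)) →
      ∃ x ∈ C, x ∈ v' +ᵥ l' • (p +ᵥ parallelepiped b) := by
  classical
  set c : ι → ℝ := fun i => b.repr (v + l • p) i
  refine ⟨(Fintype.piFinset fun i => {c i, c i + l}).image b.equivFun.symm,
    Finset.card_image_le.trans (card_piFinset_pair_le c l), fun v' l' hl' hll' hmeet => ?_⟩
  obtain ⟨y, hy, hy'⟩ := Set.not_disjoint_iff.mp hmeet
  rw [mem_vadd_smul_vadd_parallelepiped_iff b p v y hl] at hy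
  rw [mem_vadd_smul_vadd_parallelepiped_iff b p v' y hl'] at hy'
  obtain ⟨z, hz, hzmem⟩ := exists_corner_mem_box_of_mem_box hll' hy hy'
  refine ⟨b.equivFun.symm z, Finset.mem_image_of_mem _ hz, ?_⟩
  rw [mem_vadd_smul_vadd_parallelepiped_iff b p v' _ hl']
  have hrepr : ∀ i, b.repr (b.equivFun.symm z) i = z i :=
    congrFun (b.equivFun.apply_symm_apply z)
  simpa only [hrepr] using hzmem

end Parallelepiped

theorem Finset.exists_piercing_card_le_mul_card_pairwise_disjoint {α E β : Type*}
    [LinearOrder β]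
    (F : α → Set E) (r : α → β) (k : ℕ) (S : Finset α) (hne : ∀ s ∈ S, (F s).Nonempty)
    (hpierce : ∀ s ∈ S, ∃ C : Finset E, C.card ≤ k ∧
      ∀ t ∈ S, r s ≤ r t → ¬Disjoint (F s) (F t) → ∃ x ∈ C, x ∈ F t) :
    ∃ (Q : Finset E) (W : Finset α), W ⊆ S ∧ (∀ s ∈ S, ∃ x ∈ Q, x ∈ F s) ∧
      (W : Set α).Pairwise (Disjoint on F) ∧ Q.card ≤ k * W.card := by
  classical
  induction S using Finset.strongInduction with
  | H S ih =>
  rcases S.eq_empty_or_nonempty with rfl | hS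
  · exact ⟨∅, ∅, by simp⟩
  obtain ⟨s, hsS, hmin⟩ := S.exists_min_image r hS
  obtain ⟨C, hCcard, hC⟩ := hpierce s hsS
  set T := S.filter fun t => Disjoint (F s) (F t)
  have hTS : T ⊆ S := Finset.filter_subset _ _
  have hss : ¬Disjoint (F s) (F s) := fun h => (hne s hsS).ne_empty (disjoint_self.mp h)
  have hsT : s ∉ T := fun h => hss (Finset.mem_filter.mp h).2
  obtain ⟨Q, W, hWT, hQ, hW, hcard⟩ := ih T (Finset.filter_ssubset.2 ⟨s, hsS, hss⟩)
    (fun t ht => hne t (hTS ht)) fun t ht => by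
      obtain ⟨C, hC, h⟩ := hpierce t (hTS ht)
      exact ⟨C, hC, fun u hu => h u (hTS hu)⟩
  have hsW : ∀ t ∈ W, Disjoint (F s) (F t) := fun t ht => (Finset.mem_filter.mp (hWT ht)).2
  refine ⟨Q ∪ C, insert s W, Finset.insert_subset hsS (hWT.trans hTS), fun t ht => ?_, ?_, ?_⟩
  · by_cases htT : t ∈ T
    · obtain ⟨x, hx, hxt⟩ := hQ t htT
      exact ⟨x, Finset.mem_union_left _ hx, hxt⟩
    · obtain ⟨x, hx, hxt⟩ := hC t ht (hmin t ht) fun h => htT (Finset.mem_filter.mpr ⟨ht, h⟩)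
      exact ⟨x, Finset.mem_union_right _ hx, hxt⟩
  · rw [Finset.coe_insert, Set.pairwise_insert]
    exact ⟨hW, fun t ht _ => ⟨hsW t ht, (hsW t ht).symm⟩⟩
  · calc (Q ∪ C).card ≤ Q.card + C.card := Finset.card_union_le _ _
      _ ≤ k * W.card + k := by omega
      _ = k * (insert s W).card := by
        rw [Finset.card_insert_of_notMem fun h => hsT (hWT h)]; ring

theorem piercing_homothets_parallelepiped_general
    (d : ℕ)
    (b : Module.Basis (Fin d) ℝ (EuclideanSpace ℝ (Fin d)))
    (p : EuclideanSpace ℝ (Fin d))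
    (P : Set (EuclideanSpace ℝ (Fin d)))
    (hP : P = {x | ∃ t : Fin d → ℝ, (∀ i, t i ∈ Set.Icc (0 : ℝ) 1) ∧
            x = p + ∑ i, t i • b i})
    (S : Finset (ℝ × EuclideanSpace ℝ (Fin d)))
    (hS : ∀ s ∈ S, 0 < s.1) :
    ∃ (Q : Finset (EuclideanSpace ℝ (Fin d))) (W : Finset (ℝ × EuclideanSpace ℝ (Fin d))),
      W ⊆ S ∧
      (∀ s ∈ S, ∃ x ∈ Q, x ∈ s.2 +ᵥ s.1 • P) ∧
      ((W : Set (ℝ × EuclideanSpace ℝ (Fin d))).Pairwise fun s s' =>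
        Disjoint (s.2 +ᵥ s.1 • P) (s'.2 +ᵥ s'.1 • P)) ∧
      Q.card ≤ 2 ^ d * W.card := by
  rw [setOf_eq_vadd_parallelepiped] at hP
  subst hP
  refine Finset.exists_piercing_card_le_mul_card_pairwise_disjoint _ Prod.fst (2 ^ d) S
    (fun s _ => nonempty_vadd_smul_vadd_parallelepiped b p s.2 s.1) fun s hs => ?_
  obtain ⟨C, hC, hpierce⟩ := exists_card_le_two_pow_pierce_larger_homothet b p s.2 (hS s hs)
  exact ⟨C, by simpa using hC, fun t ht => hpierce t.2 t.1 (hS t ht)⟩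

/-- For every dimension `d ≥ 2`, every parallelepiped
`P = p + {∑ tᵢ bᵢ : tᵢ ∈ [0,1]}` in `ℝ^d`, and every finite family of positive homothets
of `P`, `τ(F) ≤ 2^d · ν(F)`. -/
theorem piercing_homothets_parallelepiped
    (d : ℕ) (hd : 2 ≤ d)
    (b : Module.Basis (Fin d) ℝ (EuclideanSpace ℝ (Fin d)))
    (p : EuclideanSpace ℝ (Fin d))
    (P : Set (EuclideanSpace ℝ (Fin d)))
    (hP : P = {x | ∃ t : Fin d → ℝ, (∀ i, t i ∈ Set.Icc (0 : ℝ) 1) ∧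
            x = p + ∑ i, t i • b i})
    (S : Finset (ℝ × EuclideanSpace ℝ (Fin d)))
    (hS : ∀ s ∈ S, 0 < s.1) :
    ∃ (Q : Finset (EuclideanSpace ℝ (Fin d))) (W : Finset (ℝ × EuclideanSpace ℝ (Fin d))),
      W ⊆ S ∧
      (∀ s ∈ S, ∃ x ∈ Q, x ∈ s.2 +ᵥ s.1 • P) ∧
      ((W : Set (ℝ × EuclideanSpace ℝ (Fin d))).Pairwise fun s s' =>
        Disjoint (s.2 +ᵥ s.1 • P) (s'.2 +ᵥ s'.1 • P)) ∧
      Q.card ≤ 2 ^ d * W.card :=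
  piercing_homothets_parallelepiped_general d b p P hP S hS
end
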